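/- arXiv:2206.05805 — 2 statements merged into one kernel-verified Lean document; each statement's English description precedes it below -/
import Mathlib

section
/- Let q be a prime power and let l, r, u be positive integers. Let H be a matrix over F_q with l+u rows and l(r+1) columns such that for each 1 ≤ i ≤ l, row i has entry 1 in columns (i−1)(r+1)+1, …, i(r+1) and entry 0 in all other columns; the remaining u rows are arbitrary. If every set of at most 6 distinct columns of H is linearly independent, then l·r ≤ m₂(u−1, q), where m₂(u−1, q) is the maximum size of a cap in the projective space PG(u−1, q). -/
noncomputable def wt {F : Type*} [Zero F] {ι : Type*} (x : ι → F) : ℕ :=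
  {i | x i ≠ 0}.ncard

def dualCode {F : Type*} [Field F] {n : ℕ} (C : Submodule F (Fin n → F)) :
    Submodule F (Fin n → F) where
  carrier := {y | ∀ x ∈ C, ∑ i, x i * y i = 0}
  add_mem' := by
    intro a b ha hb
    simp only [Set.mem_setOf_eq] at *
    intro z hz
    simp [Pi.add_apply, mul_add, Finset.sum_add_distrib, ha z hz, hb z hz]
  zero_mem' := by
    intro z hz
    simp
  smul_mem' := by
    intro c a ha
    simp only [Set.mem_setOf_eq] at *
    intro z hz
    have h : ∀ i, z i * (c • a) i = c * (z i * a i) := by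
      intro i; simp [smul_eq_mul]; ring
    simp only [h, ← Finset.mul_sum, ha z hz, mul_zero]

def isMinDist {F : Type*} [Field F] {ι : Type*} (C : Submodule F (ι → F)) (d : ℕ) : Prop :=
  (∃ x ∈ C, x ≠ 0 ∧ wt x = d) ∧ ∀ x ∈ C, x ≠ 0 → d ≤ wt x

def hasLocality {F : Type*} [Field F] {n : ℕ} (C : Submodule F (Fin n → F)) (r : ℕ) : Prop :=
  ∀ i : Fin n, ∃ h ∈ dualCode C, h i ≠ 0 ∧ wt h ≤ r + 1

abbrev GF4 := GaloisField 2 2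

def ceilDiv (a b : ℕ) : ℕ := (a + b - 1) / b

/-- A cap in PG(m-1,q), given by a finite set of representative vectors in F^m:
any at most 3 distinct members are linearly independent (so the vectors are nonzero,
pairwise non-proportional, and no three of the corresponding points are collinear). -/
def IsCap {F : Type*} [Field F] {m : ℕ} (S : Finset (Fin m → F)) : Prop :=
  ∀ t : Finset (Fin m → F), t ⊆ S → t.card ≤ 3 →
    LinearIndependent F (fun v : {x // x ∈ t} => (v.1 : Fin m → F))

/-- m₂(m, q): the maximum size of a cap in PG(m, F) for a finite field F. -/
noncomputable def m2 (F : Type*) [Field F] (m : ℕ) : ℕ :=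
  sSup {c : ℕ | ∃ S : Finset (Fin (m + 1) → F), IsCap S ∧ S.card = c}



def colIdx (l r : ℕ) (a : Fin l) (b : Fin (r + 1)) : Fin (l * (r + 1)) :=
  ⟨(r + 1) * a.val + b.val, by
    calc (r + 1) * a.val + b.val < (r + 1) * (a.val + 1) := by
          rw [Nat.mul_add, Nat.mul_one]; omega
      _ ≤ (r + 1) * l := Nat.mul_le_mul_left _ a.isLt
      _ = l * (r + 1) := Nat.mul_comm _ _⟩

lemma colIdx_div (l r : ℕ) (a : Fin l) (b : Fin (r + 1)) :
    (colIdx l r a b).val / (r + 1) = a.val := by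
  simp [colIdx, Nat.mul_add_div (Nat.succ_pos r), Nat.div_eq_of_lt b.isLt]

lemma colIdx_mod (l r : ℕ) (a : Fin l) (b : Fin (r + 1)) :
    (colIdx l r a b).val % (r + 1) = b.val := by
  simp [colIdx, Nat.mul_add_mod, Nat.mod_eq_of_lt b.isLt]

def rowIdx (l u : ℕ) (b : Fin u) : Fin (l + u) := ⟨l + b.val, Nat.add_lt_add_left b.isLt l⟩

def fvec (l r m : ℕ) (F : Type) [Field F]
    (H : Matrix (Fin (l + (m + 1))) (Fin (l * (r + 1))) F)
    (p : Fin l × Fin r) (b : Fin (m + 1)) : F :=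
  H (rowIdx l (m + 1) b) (colIdx l r p.1 p.2.succ) - H (rowIdx l (m + 1) b) (colIdx l r p.1 0)

lemma key_lemma (l r m : ℕ) (F : Type) [Field F]
    (H : Matrix (Fin (l + (m + 1))) (Fin (l * (r + 1))) F)
    (hloc : ∀ i : Fin (l + (m + 1)), i.val < l →
      ∀ j : Fin (l * (r + 1)), H i j = if j.val / (r + 1) = i.val then 1 else 0)
    (hind : ∀ s : Finset (Fin (l * (r + 1))), s.card ≤ 6 →
      LinearIndependent F (fun j : {x // x ∈ s} => (fun i => H i j.1)))
    (T : Finset (Fin l × Fin r)) (hT : T.card ≤ 3) (c : Fin l × Fin r → F)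
    (hsum : ∑ p ∈ T, c p • fvec l r m F H p = 0) :
    ∀ p ∈ T, c p = 0 := by
  classical
  set col1 : Fin l × Fin r → Fin (l * (r + 1)) := fun p => colIdx l r p.1 p.2.succ with hcol1
  set col0 : Fin l × Fin r → Fin (l * (r + 1)) := fun p => colIdx l r p.1 0 with hcol0
  have hcol1_div : ∀ p, (col1 p).val / (r + 1) = p.1.val := fun p => colIdx_div l r p.1 p.2.succ
  have hcol0_div : ∀ p, (col0 p).val / (r + 1) = p.1.val := fun p => colIdx_div l r p.1 0
  have hcol1_mod : ∀ p, (col1 p).val % (r + 1) = p.2.val + 1 := fun p => by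
    have := colIdx_mod l r p.1 p.2.succ; simpa using this
  have hcol0_mod : ∀ p, (col0 p).val % (r + 1) = 0 := fun p => by
    have := colIdx_mod l r p.1 0; simpa using this
  have hcol1_inj : ∀ p p', col1 p = col1 p' → p = p' := by
    intro p p' h
    have hd : (col1 p).val / (r + 1) = (col1 p').val / (r + 1) := by rw [h]
    have hm : (col1 p).val % (r + 1) = (col1 p').val % (r + 1) := by rw [h]
    rw [hcol1_div, hcol1_div] at hd
    rw [hcol1_mod, hcol1_mod] at hm
    exact Prod.ext (Fin.ext hd) (Fin.ext (by omega))
  have hcol10 : ∀ p p', col1 p ≠ col0 p' := by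
    intro p p' h
    have hm : (col1 p).val % (r + 1) = (col0 p').val % (r + 1) := by rw [h]
    rw [hcol1_mod, hcol0_mod] at hm
    omega
  set x : Fin (l * (r + 1)) → F := fun j => ∑ p ∈ T,
      ((if col1 p = j then c p else 0) - (if col0 p = j then c p else 0)) with hx
  set scols := (T.image col1) ∪ (T.image col0) with hscols
  have hxnot : ∀ j, j ∉ scols → x j = 0 := by
    intro j hj
    apply Finset.sum_eq_zero
    intro p hp
    have h1 : ¬ col1 p = j := fun h =>
      hj (Finset.mem_union_left _ (Finset.mem_image.mpr ⟨p, hp, h⟩))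
    have h0 : ¬ col0 p = j := fun h =>
      hj (Finset.mem_union_right _ (Finset.mem_image.mpr ⟨p, hp, h⟩))
    simp [h1, h0]
  have hcard : scols.card ≤ 6 := by
    have h1 := Finset.card_image_le (s := T) (f := col1)
    have h2 := Finset.card_image_le (s := T) (f := col0)
    have h3 := Finset.card_union_le (T.image col1) (T.image col0)
    rw [hscols]
    omega
  have hcols : ∀ i : Fin (l + (m + 1)), ∑ j : Fin (l * (r + 1)), x j * H i j = 0 := by
    intro i
    have hswap : ∑ j : Fin (l * (r + 1)), x j * H i j
        = ∑ p ∈ T, (c p * H i (col1 p) - c p * H i (col0 p)) := by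
      simp only [hx, Finset.sum_mul, sub_mul, ite_mul, zero_mul]
      rw [Finset.sum_comm]
      apply Finset.sum_congr rfl
      intro p _
      rw [Finset.sum_sub_distrib]
      congr 1
      · rw [Finset.sum_ite_eq]
        simp
      · rw [Finset.sum_ite_eq]
        simp
    rw [hswap]
    by_cases hi : i.val < l
    · apply Finset.sum_eq_zero
      intro p _
      rw [hloc i hi, hloc i hi, hcol1_div, hcol0_div]
      exact sub_self _
    · have hil := i.isLt
      set b : Fin (m + 1) := ⟨i.val - l, by omega⟩ with hb
      have hrow : rowIdx l (m + 1) b = i := Fin.ext (by simp [rowIdx, hb]; omega)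
      have hs := congrFun hsum b
      simp only [Finset.sum_apply, Pi.smul_apply, smul_eq_mul, Pi.zero_apply, fvec] at hs
      simp only [← mul_sub]
      rw [← hrow]
      exact hs
  have hx0 : ∀ j, x j = 0 := by
    have e2 : ∑ j ∈ scols, x j • (fun i : Fin (l + (m + 1)) => H i j)
        = ∑ j : Fin (l * (r + 1)), x j • (fun i => H i j) :=
      Finset.sum_subset (Finset.subset_univ _) (fun j _ hj => by rw [hxnot j hj, zero_smul])
    have e3 : ∑ j : Fin (l * (r + 1)), x j • (fun i : Fin (l + (m + 1)) => H i j) = 0 := by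
      ext i
      simp only [Finset.sum_apply, Pi.smul_apply, smul_eq_mul, Pi.zero_apply]
      exact hcols i
    have hsum2 : ∑ v : {y // y ∈ scols}, x v.1 • (fun i : Fin (l + (m + 1)) => H i v.1) = 0 := by
      rw [Finset.sum_coe_sort scols (fun j => x j • (fun i : Fin (l + (m + 1)) => H i j))]
      rw [e2, e3]
    have hli := linearIndependent_iff'.mp (hind scols hcard) Finset.univ (fun v => x v.1) hsum2
    intro j
    by_cases hj : j ∈ scols
    · exact hli ⟨j, hj⟩ (Finset.mem_univ _)
    · exact hxnot j hj
  intro p hp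
  have hxv := hx0 (col1 p)
  simp only [hx] at hxv
  rw [Finset.sum_eq_single p] at hxv
  · simpa [Ne.symm (hcol10 p p)] using hxv
  · intro p' hp' hne
    have h1 : ¬ col1 p' = col1 p := fun h => hne (hcol1_inj _ _ h)
    have h0 : ¬ col0 p' = col1 p := fun h => (hcol10 p p') h.symm
    simp [h1, h0]
  · intro h
    exact absurd hp h

/-- cap bound when any ≤6 columns are independent. -/
theorem stmt_3 (q l r u : ℕ) (hq : IsPrimePow q)
    (hl : 1 ≤ l) (hr : 1 ≤ r) (hu : 1 ≤ u)
    (F : Type) [Field F] [Fintype F] (hF : Fintype.card F = q)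
    (H : Matrix (Fin (l + u)) (Fin (l * (r + 1))) F)
    (hloc : ∀ i : Fin (l + u), i.val < l →
      ∀ j : Fin (l * (r + 1)), H i j = if j.val / (r + 1) = i.val then 1 else 0)
    (hind : ∀ s : Finset (Fin (l * (r + 1))), s.card ≤ 6 →
      LinearIndependent F (fun j : {x // x ∈ s} => (fun i => H i j.1))) :
    l * r ≤ m2 F (u - 1) := by
  classical
  obtain ⟨m, rfl⟩ : ∃ m, u = m + 1 := ⟨u - 1, (Nat.succ_pred_eq_of_pos hu).symm⟩
  have hinj : Function.Injective (fvec l r m F H) := by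
    intro p p' h
    by_contra hne'
    have hcard2 : ({p, p'} : Finset (Fin l × Fin r)).card ≤ 3 :=
      le_trans (Finset.card_insert_le _ _) (by simp)
    have hsum : ∑ q' ∈ ({p, p'} : Finset (Fin l × Fin r)),
        (if q' = p then (1 : F) else -1) • fvec l r m F H q' = 0 := by
      rw [Finset.sum_pair hne']
      simp [Ne.symm hne', h]
    have := key_lemma l r m F H hloc hind {p, p'} hcard2 _ hsum p (Finset.mem_insert_self _ _)
    simp at this
  have hne : Nonempty (Fin l × Fin r) := ⟨⟨⟨0, hl⟩, ⟨0, hr⟩⟩⟩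
  set S : Finset (Fin (m + 1) → F) := Finset.image (fvec l r m F H) Finset.univ with hS
  have hcap : IsCap S := by
    intro t ht hcard3
    rw [linearIndependent_iff']
    intro s g hgs v hv
    set finv : (Fin (m + 1) → F) → Fin l × Fin r := Function.invFun (fvec l r m F H) with hfinv
    have hfinv_eq : ∀ w ∈ S, fvec l r m F H (finv w) = w := by
      intro w hw
      obtain ⟨p, _, hp⟩ := Finset.mem_image.mp hw
      exact Function.invFun_eq ⟨p, hp⟩
    set T : Finset (Fin l × Fin r) := s.image (fun v' => finv v'.1) with hT
    have hTcard : T.card ≤ 3 := by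
      refine le_trans Finset.card_image_le (le_trans ?_ hcard3)
      exact le_trans (Finset.card_le_univ s) (le_of_eq (by simp))
    have hsum : ∑ p ∈ T, (∑ v' ∈ s, if finv v'.1 = p then g v' else 0) • fvec l r m F H p = 0 := by
      simp only [Finset.sum_smul, ite_smul, zero_smul]
      rw [Finset.sum_comm]
      have heach : ∀ v' ∈ s, (∑ p ∈ T, if finv v'.1 = p then g v' • fvec l r m F H p else 0)
          = g v' • v'.1 := by
        intro v' hv'
        rw [Finset.sum_ite_eq, if_pos (Finset.mem_image.mpr ⟨v', hv', rfl⟩),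
          hfinv_eq v'.1 (ht v'.2)]
      rw [Finset.sum_congr rfl heach, hgs]
    have hkey := key_lemma l r m F H hloc hind T hTcard _ hsum
    have hvT : finv v.1 ∈ T := Finset.mem_image.mpr ⟨v, hv, rfl⟩
    have hz := hkey _ hvT
    rw [Finset.sum_eq_single v] at hz
    · simpa using hz
    · intro v' hv' hne2
      have hval : v'.1 ≠ v.1 := fun hh => hne2 (Subtype.ext hh)
      have hne3 : ¬ finv v'.1 = finv v.1 := by
        intro hh
        apply hval
        rw [← hfinv_eq v'.1 (ht v'.2), ← hfinv_eq v.1 (ht v.2), hh]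
      simp [hne3]
    · intro hh
      exact absurd hv hh
  have hScard : S.card = l * r := by
    rw [hS, Finset.card_image_of_injective _ hinj, Finset.card_univ]
    simp
  have hbdd : BddAbove {c : ℕ | ∃ S' : Finset (Fin (m + 1) → F), IsCap S' ∧ S'.card = c} := by
    refine ⟨Fintype.card (Fin (m + 1) → F), ?_⟩
    rintro cc ⟨S', -, rfl⟩
    exact le_trans (Finset.card_le_univ S') (le_of_eq Finset.card_univ)
  exact le_csSup hbdd ⟨S, hcap, hScard⟩
end

section
/- For every integer s ≥ 2, there exists a linear code over GF(4) of length 3s+3, dimension 2s+1, and minimum distance 3 that has locality 2. Since (3s+3) − (2s+1) − ⌈(2s+1)/2⌉ + 2 = 3, such a code is an optimal (3s+3, 2s+1, 2) LRC meeting the Singleton-like bound. -/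
open Finset Matrix

lemma wt_eq_card_filter {F ι : Type*} [Zero F] [DecidableEq F] [Fintype ι] (x : ι → F) :
    wt x = #{i | x i ≠ 0} := by
  rw [wt, Set.ncard_eq_toFinset_card', Set.toFinset_ofPred]

section ParityCheck

variable {F : Type*} [Field F] {n : ℕ}

lemma row_mem_dualCode_ker_mulVecLin {κ : Type*} (H : Matrix κ (Fin n) F) (k : κ) :
    H k ∈ dualCode (LinearMap.ker H.mulVecLin) := by
  intro x hx
  have hk : (H *ᵥ x) k = 0 := congrFun (LinearMap.mem_ker.mp hx) k
  simpa [mulVec, dotProduct, mul_comm] using hk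

lemma finrank_ker_mulVecLin_of_surjective {κ : Type*} [Fintype κ] (H : Matrix κ (Fin n) F)
    (hH : Function.Surjective H.mulVecLin) :
    Module.finrank F (LinearMap.ker H.mulVecLin) = n - Fintype.card κ := by
  have h := LinearMap.finrank_range_add_finrank_ker H.mulVecLin
  rw [LinearMap.range_eq_top.mpr hH, finrank_top, Module.finrank_fintype_fun_eq_card,
    Module.finrank_fin_fun] at h
  omega

end ParityCheck

namespace BlockCode

variable {F : Type*} [Field F] {n : ℕ} {β : Type*} [DecidableEq β]
  (b : Fin n → β) (g : Fin n → F)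

/-- Coordinate `i` lies in block `b i` and carries the label `g i`; row `none` of the check
matrix is the row of labels, row `some j` the indicator of block `j`. -/
def checkMatrix : Matrix (Option β) (Fin n) F :=
  Matrix.of fun k i => k.elim (g i) fun j => if b i = j then 1 else 0

def code : Submodule F (Fin n → F) :=
  LinearMap.ker (checkMatrix b g).mulVecLin

variable {b g}

lemma mem_code_iff {x : Fin n → F} :
    x ∈ code b g ↔ (∀ j, ∑ i with b i = j, x i = 0) ∧ ∑ i, g i * x i = 0 := by
  simp [code, LinearMap.mem_ker, funext_iff, Option.forall, mulVec, dotProduct, checkMatrix,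
    Finset.sum_filter, and_comm]

lemma hasLocality_code {r : ℕ} (hb : ∀ j, #{i | b i = j} ≤ r + 1) :
    hasLocality (code b g) r := by
  classical
  intro i
  refine ⟨checkMatrix b g (some (b i)), row_mem_dualCode_ker_mulVecLin _ _,
    by simp [checkMatrix], ?_⟩
  rw [wt_eq_card_filter]
  simpa [checkMatrix] using hb (b i)

lemma exists_ne_of_mem_code {x : Fin n → F} (hx : x ∈ code b g) {i : Fin n} (hi : x i ≠ 0) :
    ∃ i', i' ≠ i ∧ b i' = b i ∧ x i' ≠ 0 := by
  by_contra! h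
  have hblock := (mem_code_iff.mp hx).1 (b i)
  rw [Finset.sum_eq_single_of_mem i (by simp)
    fun i' hi' hne => h i' hne (Finset.mem_filter.mp hi').2] at hblock
  exact hi hblock

lemma label_eq_of_mem_code {x : Fin n → F} (hx : x ∈ code b g) {i₁ i₂ : Fin n} (hne : i₁ ≠ i₂)
    (hb : b i₂ = b i₁) (hzero : ∀ i, i ≠ i₁ → i ≠ i₂ → x i = 0) (hx₁ : x i₁ ≠ 0) :
    g i₁ = g i₂ := by
  obtain ⟨hblock, hlabel⟩ := mem_code_iff.mp hx
  have hsum : x i₁ + x i₂ = 0 := by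
    rw [← hblock (b i₁), Finset.sum_eq_add_of_mem i₁ i₂ (by simp) (by simp [hb]) hne
      fun i _ hi => hzero i hi.1 hi.2]
  have hlab : g i₁ * x i₁ + g i₂ * x i₂ = 0 := by
    rw [← hlabel, Finset.sum_eq_add_of_mem i₁ i₂ (mem_univ _) (mem_univ _) hne
      fun i _ hi => by rw [hzero i hi.1 hi.2, mul_zero]]
  have hprod : (g i₁ - g i₂) * x i₁ = 0 := by linear_combination hlab - g i₂ * hsum
  exact sub_eq_zero.mp ((mul_eq_zero.mp hprod).resolve_right hx₁)

lemma three_le_wt_of_mem_code (hbg : Function.Injective fun i => (b i, g i))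
    {x : Fin n → F} (hx : x ∈ code b g) (hx0 : x ≠ 0) : 3 ≤ wt x := by
  classical
  obtain ⟨i₁, hx₁⟩ : ∃ i, x i ≠ 0 := Function.ne_iff.mp hx0
  obtain ⟨i₂, hne, hb, hx₂⟩ := exists_ne_of_mem_code hx hx₁
  by_contra! hlt
  rw [wt_eq_card_filter] at hlt
  have hpair : ({i₁, i₂} : Finset (Fin n)) ⊆ ({i | x i ≠ 0} : Finset _) := by
    simp [Finset.insert_subset_iff, hx₁, hx₂]
  have hsupp : ({i₁, i₂} : Finset (Fin n)) = ({i | x i ≠ 0} : Finset _) :=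
    Finset.eq_of_subset_of_card_le hpair (by rw [card_pair hne.symm]; omega)
  have hzero : ∀ i, i ≠ i₁ → i ≠ i₂ → x i = 0 := fun i h₁ h₂ => by
    by_contra h
    have hi : i ∈ ({i₁, i₂} : Finset (Fin n)) := hsupp ▸ Finset.mem_filter.mpr ⟨mem_univ _, h⟩
    simp [h₁, h₂] at hi
  exact hne (hbg (Prod.ext hb (label_eq_of_mem_code hx hne.symm hb hzero hx₁).symm))

lemma exists_wt_three_of_mem_code {i₁ i₂ i₃ : Fin n} (hb₂ : b i₂ = b i₁) (hb₃ : b i₃ = b i₁)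
    (hg₁₂ : g i₁ ≠ g i₂) (hg₁₃ : g i₁ ≠ g i₃) (hg₂₃ : g i₂ ≠ g i₃) :
    ∃ x ∈ code b g, x ≠ 0 ∧ wt x = 3 := by
  classical
  have h₁₂ : i₁ ≠ i₂ := fun h => hg₁₂ (congrArg g h)
  have h₁₃ : i₁ ≠ i₃ := fun h => hg₁₃ (congrArg g h)
  have h₂₃ : i₂ ≠ i₃ := fun h => hg₂₃ (congrArg g h)
  set x : Fin n → F := Pi.single i₁ (g i₂ - g i₃) + Pi.single i₂ (g i₃ - g i₁) +
    Pi.single i₃ (g i₁ - g i₂) with hx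
  have hsupp : ({i | x i ≠ 0} : Finset _) = {i₁, i₂, i₃} := by
    ext i
    by_cases hi₁ : i = i₁
    · subst hi₁; simp [hx, h₁₂, h₁₃, sub_eq_zero, hg₂₃]
    by_cases hi₂ : i = i₂
    · subst hi₂; simp [hx, h₁₂.symm, h₂₃, sub_eq_zero, hg₁₃.symm]
    by_cases hi₃ : i = i₃
    · subst hi₃; simp [hx, h₁₃.symm, h₂₃.symm, sub_eq_zero, hg₁₂]
    simp [hx, hi₁, hi₂, hi₃, Pi.single_apply]
  refine ⟨x, mem_code_iff.mpr ⟨fun j => ?_, ?_⟩, ?_, ?_⟩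
  · by_cases hj : b i₁ = j <;>
      simp [hx, Finset.sum_add_distrib, Finset.sum_pi_single', hb₂, hb₃, hj]
  · simp only [hx, Pi.add_apply, Pi.single_apply, mul_add, mul_ite, mul_zero, sum_add_distrib,
      sum_ite_eq', mem_univ, ↓reduceIte]
    ring
  · intro h0
    simpa [h0] using congrArg (i₁ ∈ ·) hsupp
  · rw [wt_eq_card_filter, hsupp, card_eq_three]
    exact ⟨i₁, i₂, i₃, h₁₂, h₁₃, h₂₃, rfl⟩

variable (b g) in
lemma checkMatrix_mulVec_single (i : Fin n) :
    checkMatrix b g *ᵥ Pi.single i 1 = Pi.single (some (b i)) 1 + g i • Pi.single none 1 := by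
  ext (_ | j) <;> simp [checkMatrix, Pi.single_apply, eq_comm]

lemma surjective_mulVecLin_checkMatrix [Fintype β] (hb : Function.Surjective b) {i₁ i₂ : Fin n}
    (hb₂ : b i₂ = b i₁) (hg : g i₁ ≠ g i₂) :
    Function.Surjective (checkMatrix b g).mulVecLin := by
  set H := (checkMatrix b g).mulVecLin
  have hnone : Pi.single none 1 ∈ LinearMap.range H := by
    refine ⟨(g i₁ - g i₂)⁻¹ • (Pi.single i₁ 1 - Pi.single i₂ 1), ?_⟩
    rw [map_smul, map_sub, mulVecLin_apply, mulVecLin_apply, checkMatrix_mulVec_single,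
      checkMatrix_mulVec_single, hb₂, add_sub_add_left_eq_sub, ← sub_smul, smul_smul,
      inv_mul_cancel₀ (sub_ne_zero.mpr hg), one_smul]
  rw [← LinearMap.range_eq_top, eq_top_iff, ← (Pi.basisFun F _).span_eq, Submodule.span_le,
    Set.range_subset_iff]
  rintro (_ | j) <;> rw [Pi.basisFun_apply]
  · exact hnone
  · obtain ⟨i, rfl⟩ := hb j
    have hcol : Pi.single (some (b i)) 1 = H (Pi.single i 1) - g i • Pi.single none 1 := by
      rw [mulVecLin_apply, checkMatrix_mulVec_single, add_sub_cancel_right]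
    exact hcol ▸ Submodule.sub_mem _ (LinearMap.mem_range_self H _)
      (Submodule.smul_mem _ (g i) hnone)

lemma finrank_code [Fintype β] (hb : Function.Surjective b) {i₁ i₂ : Fin n}
    (hb₂ : b i₂ = b i₁) (hg : g i₁ ≠ g i₂) :
    Module.finrank F (code b g) = n - (Fintype.card β + 1) := by
  rw [code, finrank_ker_mulVecLin_of_surjective _
    (surjective_mulVecLin_checkMatrix hb hb₂ hg), Fintype.card_option]

end BlockCode

def blockEquiv (s : ℕ) : Fin (3 * s + 3) ≃ Fin (s + 1) × Fin 3 :=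
  (finCongr (by ring)).trans finProdFinEquiv.symm

open BlockCode in
theorem exists_lrc_of_embedding {F : Type*} [Field F] (c : Fin 3 ↪ F) (s : ℕ) :
    ∃ C : Submodule F (Fin (3 * s + 3) → F),
      Module.finrank F C = 2 * s + 1 ∧ isMinDist C 3 ∧ hasLocality C 2 := by
  set e := blockEquiv s
  set b : Fin (3 * s + 3) → Fin (s + 1) := fun i => (e i).1
  set g : Fin (3 * s + 3) → F := fun i => c (e i).2
  have hbg : Function.Injective fun i => (b i, g i) := fun i i' h =>
    e.injective (Prod.ext (Prod.ext_iff.mp h).1 (c.injective (Prod.ext_iff.mp h).2))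
  have hb : Function.Surjective b := fun j => ⟨e.symm (j, 0), by simp [b]⟩
  have hblock (j : Fin (s + 1)) : #{i | b i = j} ≤ 2 + 1 := by
    refine (card_le_card_of_injOn (fun i => (e i).2) (fun _ _ => mem_univ _) ?_).trans
      (by simp)
    intro i hi i' hi' h
    simp only [coe_filter, mem_univ, true_and, Set.mem_ofPred_eq] at hi hi'
    exact e.injective (Prod.ext (hi.trans hi'.symm) h)
  have hb₀ (p : Fin 3) : b (e.symm (0, p)) = b (e.symm (0, 0)) := by simp [b]
  have hg₀ (p : Fin 3) : g (e.symm (0, p)) = c p := by simp [g]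
  have hc {p q : Fin 3} (h : p ≠ q) : g (e.symm (0, p)) ≠ g (e.symm (0, q)) := by
    simpa [hg₀] using h
  refine ⟨code b g, ?_, ⟨?_, fun x hx hx0 => three_le_wt_of_mem_code hbg hx hx0⟩,
    hasLocality_code hblock⟩
  · rw [finrank_code hb (hb₀ 1) (hc (by decide : (0 : Fin 3) ≠ 1)), Fintype.card_fin]
    omega
  · exact exists_wt_three_of_mem_code (hb₀ 1) (hb₀ 2) (hc (by decide)) (hc (by decide))
      (hc (by decide))

theorem stmt_13_general (s : ℕ) :
    ∃ C : Submodule GF4 (Fin (3 * s + 3) → GF4),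
      Module.finrank GF4 C = 2 * s + 1 ∧ isMinDist C 3 ∧ hasLocality C 2 := by
  have := Fintype.ofFinite GF4
  have hcard : Fintype.card (Fin 3) ≤ Fintype.card GF4 := by
    rw [Fintype.card_fin, ← Nat.card_eq_fintype_card, GaloisField.card 2 2 two_ne_zero]
    norm_num
  obtain ⟨c⟩ := Function.Embedding.nonempty_of_card_le hcard
  exact exists_lrc_of_embedding c s

/-- for s ≥ 2 there exists an optimal quaternary
(3s+3, 2s+1, 2) LRC with minimum distance 3. -/
theorem stmt_13 (s : ℕ) (hs : 2 ≤ s) :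
    ∃ C : Submodule GF4 (Fin (3 * s + 3) → GF4),
      Module.finrank GF4 C = 2 * s + 1 ∧ isMinDist C 3 ∧ hasLocality C 2 :=
  stmt_13_general s
end
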